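/- arXiv:2502.13786 — 2 statements merged into one kernel-verified Lean document; each statement's English description precedes it below -/
import Mathlib

section
/- Let G be a finite abelian group, 1 ≤ p ≤ 2 and 1 ≤ q ≤ 2. Suppose Σ ⊆ Ĝ satisfies the (p,q)-restriction estimate with constant ρ, i.e. ‖ĝ‖_{ℓ^q(Σ)} ≤ ρ ‖g‖_{ℓ^p(G)} for all g. Let S ⊆ G with ρ |S|^{1/p} < |G|^{1/q − 1/2}. Then for every f : G → ℂ, ‖f‖_{ℓ²(G)} ≤ (1 + |S|^{1/2} |Ĝ∖Σ|^{1/q − 1/2} / (|G|^{1/q−1/2} − ρ|S|^{1/p})) · (‖f‖_{ℓ²(G∖S)} + ‖f̂‖_{ℓ²(Ĝ∖Σ)}). -/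
open Finset ComplexConjugate

/-- ℓ²-norm of `f` over the finite set `T`. -/
noncomputable def l2norm {α : Type*} (T : Finset α) (f : α → ℂ) : ℝ :=
  Real.sqrt (∑ x ∈ T, ‖f x‖ ^ 2)

/-- ℓ^p-norm (p a real exponent) of `f` over the finite set `T`. -/
noncomputable def lpnorm {α : Type*} (p : ℝ) (T : Finset α) (f : α → ℂ) : ℝ :=
  (∑ x ∈ T, ‖f x‖ ^ p) ^ (1 / p)

/-- The unitary Fourier transform on a finite abelian group:
`f̂(χ) = |G|^{-1/2} ∑_x f x * conj (χ x)`. -/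
noncomputable def dft {G : Type*} [AddCommGroup G] [Fintype G]
    (f : G → ℂ) (χ : AddChar G ℂ) : ℂ :=
  (Real.sqrt (Fintype.card G) : ℂ)⁻¹ * ∑ x, f x * conj (χ x)

/-!
Split `f = g + h` with `g = 1_S f`. Fourier inversion and Hölder on `Ĝ` give
`‖g‖_∞ ≤ |G|^{1/2-1/q} ‖ĝ‖_q`, hence `|G|^{1/q-1/2} ‖g‖₂ ≤ |S|^{1/2} ‖ĝ‖_q`. Splitting `‖ĝ‖_q`
over `Σ` and `Ĝ ∖ Σ`, the restriction estimate and Hölder on `S` bound the first part by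
`ρ |S|^{1/p-1/2} ‖g‖₂`, which the smallness hypothesis absorbs into the left side, and Hölder
bounds the second by `|Ĝ ∖ Σ|^{1/q-1/2} ‖ĝ‖_{ℓ²(Ĝ∖Σ)}`. Finally `ĝ = f̂ - ĥ` and Parseval give
`‖ĝ‖_{ℓ²(Ĝ∖Σ)} ≤ ‖f̂‖_{ℓ²(Ĝ∖Σ)} + ‖f‖_{ℓ²(G∖S)}`.
-/

section LpNorm

variable {α : Type*}

lemma lpnorm_nonneg (p : ℝ) (T : Finset α) (u : α → ℂ) : 0 ≤ lpnorm p T u :=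
  Real.rpow_nonneg (sum_nonneg fun _ _ => Real.rpow_nonneg (norm_nonneg _) _) _

lemma l2norm_eq_lpnorm (T : Finset α) (u : α → ℂ) : l2norm T u = lpnorm 2 T u := by
  simp only [l2norm, lpnorm, Real.sqrt_eq_rpow, ← Real.rpow_two]

lemma lpnorm_one (T : Finset α) (u : α → ℂ) : lpnorm 1 T u = ∑ x ∈ T, ‖u x‖ := by
  simp [lpnorm]

lemma lpnorm_le_card_rpow_mul_lpnorm (T : Finset α) (u : α → ℂ) {a b : ℝ} (ha : 0 < a)
    (hab : a ≤ b) : lpnorm a T u ≤ (#T : ℝ) ^ (1 / a - 1 / b) * lpnorm b T u := by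
  have key := Real.inner_le_weight_mul_Lp_of_nonneg T ((one_le_div ha).2 hab) (fun _ => 1)
    (fun x => ‖u x‖ ^ a) (fun _ => zero_le_one) (fun _ => by positivity)
  simp only [one_mul, sum_const, nsmul_eq_mul, mul_one, ← Real.rpow_mul (norm_nonneg _),
    mul_div_cancel₀ _ ha.ne'] at key
  calc lpnorm a T u
      ≤ ((#T : ℝ) ^ (1 - (b / a)⁻¹) * (∑ x ∈ T, ‖u x‖ ^ b) ^ (b / a)⁻¹) ^ (1 / a) :=
        Real.rpow_le_rpow (by positivity) key (by positivity)
    _ = _ := by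
      rw [Real.mul_rpow (by positivity) (by positivity), ← Real.rpow_mul (by positivity),
        ← Real.rpow_mul (by positivity), lpnorm]
      congr 2 <;> field_simp

lemma lpnorm_le_card_rpow_mul_of_norm_le {p M : ℝ} (hp : 0 < p) (hM : 0 ≤ M) {T : Finset α}
    {u : α → ℂ} (h : ∀ x ∈ T, ‖u x‖ ≤ M) : lpnorm p T u ≤ (#T : ℝ) ^ (1 / p) * M := by
  calc lpnorm p T u ≤ (∑ _x ∈ T, M ^ p) ^ (1 / p) :=
        Real.rpow_le_rpow (by positivity)
          (sum_le_sum fun x hx => Real.rpow_le_rpow (norm_nonneg _) (h x hx) hp.le)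
          (by positivity)
    _ = (#T : ℝ) ^ (1 / p) * M := by
      rw [sum_const, nsmul_eq_mul, Real.mul_rpow (by positivity) (by positivity), one_div,
        Real.rpow_rpow_inv hM hp.ne']

lemma lpnorm_univ_le_add_compl [Fintype α] [DecidableEq α] {q : ℝ} (hq : 1 ≤ q)
    (T : Finset α) (u : α → ℂ) : lpnorm q univ u ≤ lpnorm q T u + lpnorm q Tᶜ u := by
  rw [lpnorm, ← sum_add_sum_compl T]
  exact Real.rpow_add_le_add_rpow (by positivity) (by positivity) (by positivity)
    (div_le_one_of_le₀ hq (by positivity))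

lemma lpnorm_le_add_of_norm_le {q : ℝ} (hq : 1 ≤ q) (T : Finset α) {u v w : α → ℂ}
    (h : ∀ x, ‖w x‖ ≤ ‖u x‖ + ‖v x‖) : lpnorm q T w ≤ lpnorm q T u + lpnorm q T v :=
  calc lpnorm q T w ≤ (∑ x ∈ T, (‖u x‖ + ‖v x‖) ^ q) ^ (1 / q) :=
        Real.rpow_le_rpow (by positivity)
          (sum_le_sum fun x _ => Real.rpow_le_rpow (norm_nonneg _) (h x) (by positivity))
          (by positivity)
    _ ≤ lpnorm q T u + lpnorm q T v :=
        Real.Lp_add_le_of_nonneg T hq (fun _ _ => norm_nonneg _) (fun _ _ => norm_nonneg _)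

lemma lpnorm_mono_set {q : ℝ} (hq : 0 < q) {T T' : Finset α} (hT : T' ⊆ T) (u : α → ℂ) :
    lpnorm q T' u ≤ lpnorm q T u :=
  Real.rpow_le_rpow (by positivity)
    (sum_le_sum_of_subset_of_nonneg hT fun _ _ _ => by positivity) (by positivity)

lemma lpnorm_univ_indicator [Fintype α] {p : ℝ} (hp : p ≠ 0) (T : Finset α) (u : α → ℂ) :
    lpnorm p univ ((T : Set α).indicator u) = lpnorm p T u := by
  rw [lpnorm, sum_indicator_subset_of_eq_zero u (fun _ z => ‖z‖ ^ p) (subset_univ T)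
    fun _ => by simp [Real.zero_rpow hp], lpnorm]

end LpNorm

section Fourier

variable {G : Type*} [AddCommGroup G] [Fintype G]

lemma sum_addChar_mul_conj [DecidableEq G] (x y : G) :
    ∑ χ : AddChar G ℂ, χ x * conj (χ y) = if x = y then (Fintype.card G : ℂ) else 0 := by
  simp only [← AddChar.map_neg_eq_conj, ← AddChar.map_add_eq_mul, ← sub_eq_add_neg,
    AddChar.sum_apply_eq_ite, sub_eq_zero]

lemma sum_dft_mul_apply [DecidableEq G] (g : G → ℂ) (x : G) :
    ∑ χ : AddChar G ℂ, dft g χ * χ x = Real.sqrt (Fintype.card G) * g x := by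
  have hN : (Real.sqrt (Fintype.card G) : ℂ) ^ 2 = Fintype.card G := by
    rw [← Complex.ofReal_pow, Real.sq_sqrt (Nat.cast_nonneg _), Complex.ofReal_natCast]
  have hN0 : (Real.sqrt (Fintype.card G) : ℂ) ≠ 0 := by
    rw [Complex.ofReal_ne_zero, Real.sqrt_ne_zero']; exact_mod_cast Fintype.card_pos
  calc ∑ χ : AddChar G ℂ, dft g χ * χ x
      = (Real.sqrt (Fintype.card G) : ℂ)⁻¹ * ∑ y, g y * ∑ χ : AddChar G ℂ, χ x * conj (χ y) := by
        simp only [dft, mul_sum, sum_mul]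
        rw [sum_comm]
        exact sum_congr rfl fun _ _ => sum_congr rfl fun _ _ => by ring
    _ = Real.sqrt (Fintype.card G) * g x := by
        simp only [sum_addChar_mul_conj, mul_ite, mul_zero, sum_ite_eq, mem_univ, if_true]
        rw [← hN]
        field_simp

lemma sum_norm_dft_sq [DecidableEq G] (g : G → ℂ) :
    ∑ χ : AddChar G ℂ, ‖dft g χ‖ ^ 2 = ∑ x, ‖g x‖ ^ 2 := by
  have hN0 : (Real.sqrt (Fintype.card G) : ℂ) ≠ 0 := by
    rw [Complex.ofReal_ne_zero, Real.sqrt_ne_zero']; exact_mod_cast Fintype.card_pos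
  have key : ∑ χ : AddChar G ℂ, dft g χ * conj (dft g χ) = ∑ x, g x * conj (g x) :=
    calc ∑ χ : AddChar G ℂ, dft g χ * conj (dft g χ)
        = (Real.sqrt (Fintype.card G) : ℂ)⁻¹ *
            ∑ x, conj (g x) * ∑ χ : AddChar G ℂ, dft g χ * χ x := by
          have hconj : ∀ χ : AddChar G ℂ, conj (dft g χ) =
              (Real.sqrt (Fintype.card G) : ℂ)⁻¹ * ∑ x, conj (g x) * χ x := fun χ => by
            simp [dft, map_sum]
          simp only [hconj, mul_sum]
          rw [sum_comm]
          exact sum_congr rfl fun _ _ => sum_congr rfl fun _ _ => by ring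
      _ = ∑ x, g x * conj (g x) := by
          simp only [sum_dft_mul_apply, mul_sum]
          exact sum_congr rfl fun _ _ => by field_simp
  simpa only [Complex.mul_conj', ← Complex.ofReal_pow, ← Complex.ofReal_sum,
    Complex.ofReal_inj] using key

lemma lpnorm_two_dft [DecidableEq G] (g : G → ℂ) :
    lpnorm 2 univ (dft g) = lpnorm 2 univ g := by
  rw [← l2norm_eq_lpnorm, ← l2norm_eq_lpnorm, l2norm, l2norm, sum_norm_dft_sq]

lemma dft_add (g h : G → ℂ) : dft (g + h) = dft g + dft h := by
  ext χ
  simp only [dft, Pi.add_apply, add_mul, sum_add_distrib, mul_add]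

lemma lpnorm_two_dft_indicator_le [DecidableEq G] (T : Finset (AddChar G ℂ)) (S : Finset G)
    (f : G → ℂ) :
    lpnorm 2 T (dft ((S : Set G).indicator f)) ≤ lpnorm 2 T (dft f) + lpnorm 2 Sᶜ f := by
  set h := ((Sᶜ : Finset G) : Set G).indicator f
  have hf : dft f = dft ((S : Set G).indicator f) + dft h := by
    rw [← dft_add]; simp only [h, coe_compl, Set.indicator_self_add_compl]
  calc lpnorm 2 T (dft ((S : Set G).indicator f)) ≤ lpnorm 2 T (dft f) + lpnorm 2 T (dft h) :=
        lpnorm_le_add_of_norm_le one_le_two _ fun χ => by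
          rw [hf]; exact norm_le_add_norm_add _ _
    _ ≤ lpnorm 2 T (dft f) + lpnorm 2 univ (dft h) := by
        gcongr; exact lpnorm_mono_set two_pos (subset_univ _) _
    _ = lpnorm 2 T (dft f) + lpnorm 2 Sᶜ f := by
        rw [lpnorm_two_dft, lpnorm_univ_indicator two_ne_zero]

lemma rpow_mul_norm_le_lpnorm_dft [DecidableEq G] {q : ℝ} (hq : 1 ≤ q) (g : G → ℂ) (x : G) :
    (Fintype.card G : ℝ) ^ (1 / q - 1 / 2) * ‖g x‖ ≤ lpnorm q univ (dft g) := by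
  have hN : (0 : ℝ) < Fintype.card G := by exact_mod_cast Fintype.card_pos
  have hsup : Real.sqrt (Fintype.card G) * ‖g x‖ ≤ ∑ χ : AddChar G ℂ, ‖dft g χ‖ :=
    calc Real.sqrt (Fintype.card G) * ‖g x‖ = ‖∑ χ : AddChar G ℂ, dft g χ * χ x‖ := by
          rw [sum_dft_mul_apply, norm_mul, Complex.norm_real,
            Real.norm_of_nonneg (Real.sqrt_nonneg _)]
      _ ≤ ∑ χ : AddChar G ℂ, ‖dft g χ‖ :=
          (norm_sum_le _ _).trans_eq
            (sum_congr rfl fun χ _ => by rw [norm_mul, AddChar.norm_apply, mul_one])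
  have hHolder := lpnorm_le_card_rpow_mul_lpnorm univ (dft g) one_pos hq
  rw [lpnorm_one, card_univ, AddChar.card_eq, div_one] at hHolder
  calc (Fintype.card G : ℝ) ^ (1 / q - 1 / 2) * ‖g x‖
      = (Fintype.card G : ℝ) ^ (-(1 - 1 / q)) * (Real.sqrt (Fintype.card G) * ‖g x‖) := by
        rw [Real.sqrt_eq_rpow, ← mul_assoc, ← Real.rpow_add hN]
        ring_nf
    _ ≤ (Fintype.card G : ℝ) ^ (-(1 - 1 / q)) *
          ((Fintype.card G : ℝ) ^ (1 - 1 / q) * lpnorm q univ (dft g)) := by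
        exact mul_le_mul_of_nonneg_left (hsup.trans hHolder) (by positivity)
    _ = lpnorm q univ (dft g) := by
        rw [← mul_assoc, ← Real.rpow_add hN, neg_add_cancel, Real.rpow_zero, one_mul]

end Fourier

lemma sub_mul_lpnorm_two_le_of_restriction {G : Type*} [AddCommGroup G] [Fintype G]
    [DecidableEq G] {S : Finset G} {Sig : Finset (AddChar G ℂ)} {p q ρ : ℝ} (hp : 0 < p)
    (hp2 : p ≤ 2) (hq : 1 ≤ q) (hq2 : q ≤ 2) (hρ : 0 ≤ ρ) (f : G → ℂ)
    (hrest : lpnorm q Sig (dft ((S : Set G).indicator f)) ≤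
      ρ * lpnorm p univ ((S : Set G).indicator f)) :
    ((Fintype.card G : ℝ) ^ (1 / q - 1 / 2) - ρ * (#S : ℝ) ^ (1 / p)) * lpnorm 2 S f ≤
      Real.sqrt #S * (#Sigᶜ : ℝ) ^ (1 / q - 1 / 2) *
        lpnorm 2 Sigᶜ (dft ((S : Set G).indicator f)) := by
  set g := (S : Set G).indicator f
  set m := (Fintype.card G : ℝ) ^ (1 / q - 1 / 2)
  have hm : 0 < m := by positivity
  set X := lpnorm 2 S f
  set Y := lpnorm 2 Sigᶜ (dft g)
  set L := lpnorm q univ (dft g)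
  have hmX : m * X ≤ Real.sqrt #S * L := by
    have hbound : ∀ x ∈ S, ‖f x‖ ≤ L / m := fun x hx => by
      rw [le_div_iff₀' hm, ← Set.indicator_of_mem (mem_coe.2 hx) f]
      exact rpow_mul_norm_le_lpnorm_dft hq g x
    have hX := lpnorm_le_card_rpow_mul_of_norm_le two_pos
      (div_nonneg (lpnorm_nonneg _ _ _) hm.le) hbound
    rw [← Real.sqrt_eq_rpow, mul_div_assoc'] at hX
    rwa [le_div_iff₀' hm] at hX
  have hL : L ≤ ρ * ((#S : ℝ) ^ (1 / p - 1 / 2) * X) + (#Sigᶜ : ℝ) ^ (1 / q - 1 / 2) * Y :=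
    calc L ≤ lpnorm q Sig (dft g) + lpnorm q Sigᶜ (dft g) := lpnorm_univ_le_add_compl hq _ _
      _ ≤ _ := by
        gcongr
        · refine hrest.trans (mul_le_mul_of_nonneg_left ?_ hρ)
          rw [lpnorm_univ_indicator hp.ne']
          exact lpnorm_le_card_rpow_mul_lpnorm _ _ hp hp2
        · exact lpnorm_le_card_rpow_mul_lpnorm _ _ (by linarith) hq2
  have hcard : Real.sqrt #S * (#S : ℝ) ^ (1 / p - 1 / 2) = (#S : ℝ) ^ (1 / p) := by
    rw [Real.sqrt_eq_rpow, ← Real.rpow_add' (Nat.cast_nonneg _) (by ring_nf; positivity)]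
    ring_nf
  rw [← hcard]
  linarith [hmX.trans (mul_le_mul_of_nonneg_left hL (Real.sqrt_nonneg _))]

/-- the `q ≤ 2` version of the uncertainty principle for sets satisfying a
`(p,q)`-restriction estimate. -/
theorem stmt4 {G : Type} [AddCommGroup G] [Fintype G] [DecidableEq G]
    (S : Finset G) (Sig : Finset (AddChar G ℂ))
    (p q ρ : ℝ) (hp : 1 ≤ p) (hp2 : p ≤ 2) (hq : 1 ≤ q) (hq2 : q ≤ 2) (hρ : 0 ≤ ρ)
    (hrest : ∀ g : G → ℂ, lpnorm q Sig (dft g) ≤ ρ * lpnorm p Finset.univ g)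
    (hsmall : ρ * (S.card : ℝ) ^ (1 / p) < (Fintype.card G : ℝ) ^ (1 / q - 1 / 2)) :
    ∀ f : G → ℂ,
      l2norm Finset.univ f ≤
        (1 + Real.sqrt S.card * (Sigᶜ.card : ℝ) ^ (1 / q - 1 / 2) /
            ((Fintype.card G : ℝ) ^ (1 / q - 1 / 2) - ρ * (S.card : ℝ) ^ (1 / p))) *
          (l2norm Sᶜ f + l2norm Sigᶜ (dft f)) := by
  intro f
  have hS : lpnorm 2 S f ≤ Real.sqrt #S * (#Sigᶜ : ℝ) ^ (1 / q - 1 / 2) /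
      ((Fintype.card G : ℝ) ^ (1 / q - 1 / 2) - ρ * (#S : ℝ) ^ (1 / p)) *
        (lpnorm 2 Sᶜ f + lpnorm 2 Sigᶜ (dft f)) := by
    rw [div_mul_eq_mul_div, le_div_iff₀' (sub_pos.2 hsmall), add_comm (lpnorm 2 Sᶜ f)]
    exact (sub_mul_lpnorm_two_le_of_restriction (by linarith) hp2 hq hq2 hρ f (hrest _)).trans
      (mul_le_mul_of_nonneg_left (lpnorm_two_dft_indicator_le Sigᶜ S f) (by positivity))
  simp only [l2norm_eq_lpnorm]
  rw [add_mul, one_mul]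
  linarith [lpnorm_univ_le_add_compl one_le_two S f, lpnorm_nonneg 2 Sigᶜ (dft f)]
end

section
/- Let G be a locally compact abelian group, S ⊆ G and Σ ⊆ Ĝ measurable. Let P_S f = 1_S f and Q_Σ = F^{-1} 1_Σ F, where F is the (unitary) Fourier transform. If ‖P_S Q_Σ‖_{L²→L²} < 1, then (S,Σ) is a strong annihilating pair: for every f ∈ L²(G), ‖f‖_{L²(G)} ≤ C (‖f‖_{L²(G∖S)} + ‖f̂‖_{L²(Ĝ∖Σ)}) with C = 1 + (1 − ‖P_S Q_Σ‖²)^{-1/2}. -/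
open Finset ComplexConjugate

/-- The inverse Fourier transform on a finite abelian group. -/
noncomputable def idft {G : Type*} [AddCommGroup G] [Fintype G]
    (g : AddChar G ℂ → ℂ) (x : G) : ℂ :=
  (Real.sqrt (Fintype.card G) : ℂ)⁻¹ * ∑ χ, g χ * χ x

/-!
Write `Q = Q_Σ f` for the frequency cutoff of `f`. By Parseval, `‖f - Q‖ = ‖f̂‖_{Σᶜ}`.
Since `Q_Σ` is idempotent, the hypothesis gives `‖Q‖_S = ‖P_S Q_Σ Q‖ ≤ A ‖Q‖`, while off `S`
the triangle inequality gives `‖Q‖_{Sᶜ} ≤ ‖f‖_{Sᶜ} + ‖f - Q‖`. Adding squares,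
`(1 - A²) ‖Q‖² ≤ (‖f‖_{Sᶜ} + ‖f̂‖_{Σᶜ})²`, and `‖f‖ ≤ ‖Q‖ + ‖f - Q‖` finishes the proof.
-/

section L2Norm

variable {α : Type*}

lemma l2norm_eq_norm_toLp (T : Finset α) (f : α → ℂ) :
    l2norm T f = ‖(WithLp.toLp 2 (T.restrict f) : EuclideanSpace ℂ T)‖ := by
  rw [EuclideanSpace.norm_eq, l2norm, ← Finset.sum_coe_sort]
  rfl

lemma l2norm_nonneg (T : Finset α) (f : α → ℂ) : 0 ≤ l2norm T f :=
  Real.sqrt_nonneg _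

lemma l2norm_sq (T : Finset α) (f : α → ℂ) : l2norm T f ^ 2 = ∑ x ∈ T, ‖f x‖ ^ 2 :=
  Real.sq_sqrt (by positivity)

lemma l2norm_add_le (T : Finset α) (u v : α → ℂ) :
    l2norm T (u + v) ≤ l2norm T u + l2norm T v := by
  have h : (WithLp.toLp 2 (T.restrict (u + v)) : EuclideanSpace ℂ T) =
      WithLp.toLp 2 (T.restrict u) + WithLp.toLp 2 (T.restrict v) := by
    rw [← WithLp.toLp_add]
    rfl
  simp only [l2norm_eq_norm_toLp, h]
  exact norm_add_le _ _

lemma l2norm_sub_comm (T : Finset α) (u v : α → ℂ) : l2norm T (u - v) = l2norm T (v - u) := by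
  simp only [l2norm, Pi.sub_apply, norm_sub_rev]

lemma l2norm_le_of_subset {T T' : Finset α} (h : T ⊆ T') (f : α → ℂ) :
    l2norm T f ≤ l2norm T' f :=
  Real.sqrt_le_sqrt (Finset.sum_le_sum_of_subset_of_nonneg h fun _ _ _ => by positivity)

variable [Fintype α] [DecidableEq α]

lemma l2norm_sq_add_compl (T : Finset α) (f : α → ℂ) :
    l2norm T f ^ 2 + l2norm Tᶜ f ^ 2 = l2norm Finset.univ f ^ 2 := by
  simp only [l2norm_sq, Finset.sum_add_sum_compl]

lemma l2norm_ite_mem (T : Finset α) (f : α → ℂ) :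
    l2norm Finset.univ (fun x => if x ∈ T then f x else 0) = l2norm T f := by
  simp only [l2norm, apply_ite (fun z : ℂ => ‖z‖ ^ 2), norm_zero, ne_eq, OfNat.ofNat_ne_zero,
    not_false_eq_true, zero_pow, Finset.sum_ite_mem, Finset.univ_inter]

end L2Norm

section Fourier

variable {G : Type*} [AddCommGroup G] [Fintype G]

lemma inv_sqrt_mul_inv_sqrt (n : ℕ) :
    ((Real.sqrt n : ℂ))⁻¹ * ((Real.sqrt n : ℂ))⁻¹ = (n : ℂ)⁻¹ := by
  rw [← mul_inv, ← Complex.ofReal_mul, Real.mul_self_sqrt n.cast_nonneg, Complex.ofReal_natCast]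

lemma sum_conj_apply_mul_apply [DecidableEq G] (x y : G) :
    ∑ χ : AddChar G ℂ, conj (χ y) * χ x = if y = x then (Fintype.card G : ℂ) else 0 := by
  simp_rw [← AddChar.map_neg_eq_conj, ← AddChar.map_add_eq_mul, neg_add_eq_sub,
    AddChar.sum_apply_eq_ite, sub_eq_zero, eq_comm]

lemma sum_apply_mul_conj_apply (χ χ' : AddChar G ℂ) :
    ∑ x, χ' x * conj (χ x) = if χ' = χ then (Fintype.card G : ℂ) else 0 := by
  classical
  simp_rw [← AddChar.map_neg_eq_conj, ← AddChar.sub_apply, AddChar.sum_eq_ite, sub_eq_zero]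

lemma idft_dft (f : G → ℂ) : idft (dft f) = f := by
  classical
  ext x
  calc idft (dft f) x
      = (Real.sqrt (Fintype.card G) : ℂ)⁻¹ * (Real.sqrt (Fintype.card G) : ℂ)⁻¹ *
          ∑ y, f y * ∑ χ : AddChar G ℂ, conj (χ y) * χ x := by
        simp only [idft, dft, Finset.sum_mul, Finset.mul_sum]
        rw [Finset.sum_comm]
        ring_nf
    _ = f x := by
        simp only [inv_sqrt_mul_inv_sqrt, sum_conj_apply_mul_apply, mul_ite, mul_zero,
          Finset.sum_ite_eq', Finset.mem_univ, if_true]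
        field_simp

lemma dft_idft (g : AddChar G ℂ → ℂ) : dft (idft g) = g := by
  ext χ
  calc dft (idft g) χ
      = (Real.sqrt (Fintype.card G) : ℂ)⁻¹ * (Real.sqrt (Fintype.card G) : ℂ)⁻¹ *
          ∑ χ' : AddChar G ℂ, g χ' * ∑ x, χ' x * conj (χ x) := by
        simp only [idft, dft, Finset.sum_mul, Finset.mul_sum]
        rw [Finset.sum_comm]
        ring_nf
    _ = g χ := by
        simp only [inv_sqrt_mul_inv_sqrt, sum_apply_mul_conj_apply, mul_ite, mul_zero,
          Finset.sum_ite_eq', Finset.mem_univ, if_true]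
        field_simp

lemma sum_dft_mul_conj (f : G → ℂ) (g : AddChar G ℂ → ℂ) :
    ∑ χ, dft f χ * conj (g χ) = ∑ x, f x * conj (idft g x) := by
  simp only [dft, idft, map_mul, map_sum, map_inv₀, Complex.conj_ofReal, Finset.mul_sum,
    Finset.sum_mul]
  rw [Finset.sum_comm]
  refine Finset.sum_congr rfl fun x _ => Finset.sum_congr rfl fun χ _ => ?_
  ring

lemma l2norm_dft (f : G → ℂ) : l2norm Finset.univ (dft f) = l2norm Finset.univ f := by
  have h := sum_dft_mul_conj f (dft f)
  simp only [idft_dft, Complex.mul_conj', ← Complex.ofReal_pow, ← Complex.ofReal_sum,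
    Complex.ofReal_inj] at h
  rw [l2norm, l2norm, h]

lemma dft_sub (u v : G → ℂ) : dft (u - v) = dft u - dft v := by
  ext χ
  simp only [dft, Pi.sub_apply, sub_mul, Finset.sum_sub_distrib, mul_sub]

end Fourier

section Cutoff

variable {G : Type*} [AddCommGroup G] [Fintype G]

noncomputable def freqCutoff (Sig : Finset (AddChar G ℂ)) (f : G → ℂ) : G → ℂ :=
  idft fun χ => if χ ∈ Sig then dft f χ else 0

variable (Sig : Finset (AddChar G ℂ))

lemma dft_freqCutoff (f : G → ℂ) (χ : AddChar G ℂ) :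
    dft (freqCutoff Sig f) χ = if χ ∈ Sig then dft f χ else 0 := by
  rw [freqCutoff, dft_idft]

lemma freqCutoff_freqCutoff (f : G → ℂ) :
    freqCutoff Sig (freqCutoff Sig f) = freqCutoff Sig f := by
  simp only [freqCutoff, dft_idft]
  congr 1
  ext χ
  split_ifs <;> rfl

lemma l2norm_sub_freqCutoff (f : G → ℂ) :
    l2norm Finset.univ (f - freqCutoff Sig f) = l2norm Sigᶜ (dft f) := by
  rw [← l2norm_dft, dft_sub, ← l2norm_ite_mem Sigᶜ]
  congr 1
  ext χ
  by_cases h : χ ∈ Sig <;> simp [dft_freqCutoff, h]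

end Cutoff

lemma le_inv_sqrt_one_sub_sq_mul {q c A : ℝ} (hq : 0 ≤ q) (hc : 0 ≤ c) (hA : A ^ 2 < 1)
    (h : q ^ 2 ≤ A ^ 2 * q ^ 2 + c ^ 2) : q ≤ (Real.sqrt (1 - A ^ 2))⁻¹ * c := by
  have hpos : 0 < Real.sqrt (1 - A ^ 2) := Real.sqrt_pos.2 (by linarith)
  rw [inv_mul_eq_div, le_div_iff₀ hpos, ← pow_le_pow_iff_left₀ (by positivity) hc two_ne_zero,
    mul_pow, Real.sq_sqrt (by linarith)]
  linarith

lemma l2norm_freqCutoff_sq_le {G : Type*} [AddCommGroup G] [Fintype G] [DecidableEq G]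
    {S : Finset G} {Sig : Finset (AddChar G ℂ)} {A : ℝ}
    (hop : ∀ f : G → ℂ,
      l2norm Finset.univ (fun x => if x ∈ S then freqCutoff Sig f x else 0) ≤
        A * l2norm Finset.univ f)
    (f : G → ℂ) :
    l2norm Finset.univ (freqCutoff Sig f) ^ 2 ≤
      A ^ 2 * l2norm Finset.univ (freqCutoff Sig f) ^ 2 +
        (l2norm Sᶜ f + l2norm Sigᶜ (dft f)) ^ 2 := by
  set Q := freqCutoff Sig f
  have on_S : l2norm S Q ≤ A * l2norm Finset.univ Q := by
    simpa only [Q, freqCutoff_freqCutoff, l2norm_ite_mem] using hop Q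
  have off_S : l2norm Sᶜ Q ≤ l2norm Sᶜ f + l2norm Sigᶜ (dft f) :=
    calc l2norm Sᶜ Q = l2norm Sᶜ (f + (Q - f)) := by rw [add_sub_cancel]
      _ ≤ l2norm Sᶜ f + l2norm Sᶜ (Q - f) := l2norm_add_le _ _ _
      _ ≤ l2norm Sᶜ f + l2norm Finset.univ (f - Q) := by
        rw [l2norm_sub_comm Finset.univ]
        gcongr
        exact l2norm_le_of_subset (Finset.subset_univ _) _
      _ = l2norm Sᶜ f + l2norm Sigᶜ (dft f) := by rw [l2norm_sub_freqCutoff]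
  have on_S_sq : l2norm S Q ^ 2 ≤ A ^ 2 * l2norm Finset.univ Q ^ 2 := by
    rw [← mul_pow]
    exact pow_le_pow_left₀ (l2norm_nonneg _ _) on_S 2
  have off_S_sq := pow_le_pow_left₀ (l2norm_nonneg _ _) off_S 2
  linarith [l2norm_sq_add_compl S Q]

/-- if the time-frequency limiting operator `P_S Q_Σ` has operator norm
(bounded by some) `A < 1`, then `(S,Σ)` is a strong annihilating pair with constant
`1 + (1 - A²)^{-1/2}`. -/
theorem stmt10 {G : Type} [AddCommGroup G] [Fintype G] [DecidableEq G]
    (S : Finset G) (Sig : Finset (AddChar G ℂ)) (A : ℝ) (hA : A < 1)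
    (hop : ∀ f : G → ℂ,
      l2norm Finset.univ
          (fun x => if x ∈ S then
            idft (fun χ => if χ ∈ Sig then dft f χ else 0) x else 0) ≤
        A * l2norm Finset.univ f) :
    ∀ f : G → ℂ,
      l2norm Finset.univ f ≤
        (1 + (Real.sqrt (1 - A ^ 2))⁻¹) * (l2norm Sᶜ f + l2norm Sigᶜ (dft f)) := by
  intro f
  have hA0 : 0 ≤ A := by
    have hone : 0 < l2norm Finset.univ (fun _ : G => (1 : ℂ)) := by
      simp [l2norm, Fintype.card_pos]
    exact (mul_nonneg_iff_of_pos_right hone).mp ((l2norm_nonneg _ _).trans (hop _))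
  have hQ := le_inv_sqrt_one_sub_sq_mul (l2norm_nonneg _ _)
    (add_nonneg (l2norm_nonneg _ _) (l2norm_nonneg _ _)) (by nlinarith)
    (l2norm_freqCutoff_sq_le hop f)
  have hSc := l2norm_nonneg Sᶜ f
  calc l2norm Finset.univ f
      = l2norm Finset.univ (freqCutoff Sig f + (f - freqCutoff Sig f)) := by rw [add_sub_cancel]
    _ ≤ l2norm Finset.univ (freqCutoff Sig f) + l2norm Sigᶜ (dft f) := by
      rw [← l2norm_sub_freqCutoff]
      exact l2norm_add_le _ _ _
    _ ≤ (1 + (Real.sqrt (1 - A ^ 2))⁻¹) * (l2norm Sᶜ f + l2norm Sigᶜ (dft f)) := by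
      linarith
end
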